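/- arXiv:1409.0250 — 3 statements merged into one kernel-verified Lean document; each statement's English description precedes it below -/
import Mathlib

section
/- For every natural number n > 2, we have 3^n - 2·2^n + 2 > 3^(n-1). -/
theorem Nat.two_pow_succ_le_three_pow {m : ℕ} (hm : 2 ≤ m) : 2 ^ (m + 1) ≤ 3 ^ m := by
  induction m, hm using Nat.le_induction with
  | base => norm_num
  | succ k _ ih => rw [pow_succ, pow_succ 3]; omega

theorem stmt_0 (n : ℕ) (hn : 2 < n) :
    (3 : ℤ) ^ n - 2 * 2 ^ n + 2 > 3 ^ (n - 1) := by
  obtain ⟨m, rfl⟩ : ∃ m, n = m + 1 := ⟨n - 1, by omega⟩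
  have key : (2 : ℤ) ^ (m + 1) ≤ 3 ^ m := by
    exact_mod_cast Nat.two_pow_succ_le_three_pow (by omega)
  rw [Nat.add_sub_cancel, pow_succ (3 : ℤ)]
  linarith
end

section
/- For every natural number k, the sum over all triples (k1, k2, k3) of nonnegative integers with k1 + k2 + k3 = k of the square of the multinomial coefficient k!/(k1!·k2!·k3!) equals the sum over i from 0 to k of C(k, i)^2 · C(2i, i). -/
open Finset

lemma sum_choose_sq (i : ℕ) :
    ∑ j ∈ Finset.range (i + 1), (i.choose j) ^ 2 = (2 * i).choose i := by
  rw [two_mul, Nat.add_choose_eq, Finset.Nat.sum_antidiagonal_eq_sum_range_succ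
    (fun a b => i.choose a * i.choose b)]
  refine Finset.sum_congr rfl fun j hj => ?_
  rw [Finset.mem_range, Nat.lt_succ_iff] at hj
  rw [← Nat.choose_symm hj, sq, Nat.choose_symm hj]

lemma multi_eq (a b c k : ℕ) (h : a + b + c = k) :
    k.factorial / (a.factorial * b.factorial * c.factorial)
      = k.choose (b + c) * (b + c).choose b := by
  have h1 : (b + c).choose b * b.factorial * c.factorial = (b + c).factorial :=
    by
    have := Nat.choose_mul_factorial_mul_factorial (Nat.le_add_right b c)
    rw [show b + c - b = c by omega] at this
    exact this
  have h2 : k.choose (b + c) * (b + c).factorial * a.factorial = k.factorial := by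
    have : b + c ≤ k := by omega
    have := Nat.choose_mul_factorial_mul_factorial this
    rw [show k - (b + c) = a by omega] at this
    exact this
  have key : k.factorial = k.choose (b + c) * (b + c).choose b
      * (a.factorial * b.factorial * c.factorial) := by
    rw [← h2, ← h1]; ring
  rw [key, Nat.mul_div_cancel]
  positivity

theorem stmt_3 (k : ℕ) :
    ∑ t ∈ (Finset.range (k + 1) ×ˢ Finset.range (k + 1) ×ˢ Finset.range (k + 1)).filter
        (fun t => t.1 + t.2.1 + t.2.2 = k),
      (k.factorial / (t.1.factorial * t.2.1.factorial * t.2.2.factorial)) ^ 2 =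
    ∑ i ∈ Finset.range (k + 1), (k.choose i) ^ 2 * (2 * i).choose i := by
  have step1 : ∑ t ∈ (Finset.range (k + 1) ×ˢ Finset.range (k + 1) ×ˢ Finset.range (k + 1)).filter
        (fun t => t.1 + t.2.1 + t.2.2 = k),
      (k.factorial / (t.1.factorial * t.2.1.factorial * t.2.2.factorial)) ^ 2 =
      ∑ p ∈ (Finset.range (k + 1) ×ˢ Finset.range (k + 1)).filter (fun p => p.2 ≤ p.1),
        (k.choose p.1) ^ 2 * (p.1.choose p.2) ^ 2 := by
    refine Finset.sum_nbij' (fun t => (t.2.1 + t.2.2, t.2.1))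
      (fun p => (k - p.1, p.2, p.1 - p.2)) ?_ ?_ ?_ ?_ ?_
    · intro t ht
      simp only [Finset.mem_filter, Finset.mem_product, Finset.mem_range] at ht ⊢
      omega
    · intro p hp
      simp only [Finset.mem_filter, Finset.mem_product, Finset.mem_range] at hp ⊢
      omega
    · intro t ht
      simp only [Finset.mem_filter, Finset.mem_product, Finset.mem_range] at ht
      ext <;> simp <;> omega
    · intro p hp
      simp only [Finset.mem_filter, Finset.mem_product, Finset.mem_range] at hp
      ext <;> simp <;> omega
    · intro t ht
      simp only [Finset.mem_filter, Finset.mem_product, Finset.mem_range] at ht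
      rw [multi_eq t.1 t.2.1 t.2.2 k ht.2, mul_pow]
  rw [step1]
  rw [Finset.sum_filter]
  rw [Finset.sum_product]
  refine Finset.sum_congr rfl fun i hi => ?_
  rw [← sum_choose_sq i, Finset.mul_sum]
  rw [Finset.mem_range] at hi
  rw [← Finset.sum_filter]
  congr 1
  ext j
  simp only [Finset.mem_filter, Finset.mem_range]
  omega
end

section
/- Let (a_n) be a sequence of positive reals satisfying a_1 = 3, a_2 = 15, and the recurrence (n+1)^2 · a_{n+1} = (10n^2 + 10n + 3) · a_n - 9n^2 · a_{n-1} for all n ≥ 2. Then a_{n+1} < 9 · a_n for all n ≥ 1. -/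
theorem stmt_5 (a : ℕ → ℝ) (hpos : ∀ n, 0 < a n)
    (h1 : a 1 = 3) (h2 : a 2 = 15)
    (hrec : ∀ n : ℕ, 2 ≤ n → ((n : ℝ) + 1) ^ 2 * a (n + 1) =
      (10 * (n : ℝ) ^ 2 + 10 * n + 3) * a n - 9 * (n : ℝ) ^ 2 * a (n - 1)) :
    ∀ n : ℕ, 1 ≤ n → a (n + 1) < 9 * a n := by
  intro n hn
  induction n, hn using Nat.le_induction with
  | base => rw [h1, h2]; norm_num
  | succ n hn ih =>
    have h2n : 2 ≤ n + 1 := by omega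
    have hr := hrec (n + 1) h2n
    simp only [Nat.add_sub_cancel] at hr
    push_cast at hr
    have hN : (1 : ℝ) ≤ (n : ℝ) := by exact_mod_cast hn
    have key : ((n : ℝ) + 1 + 1) ^ 2 * a (n + 1 + 1) < 9 * ((n : ℝ) + 1 + 1) ^ 2 * a (n + 1) := by
      rw [hr]
      nlinarith [hpos n, hpos (n + 1), ih]
    nlinarith [key, hpos (n + 1 + 1), sq_nonneg ((n : ℝ) + 2)]
end
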